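/- arXiv:0706.0073 — 2 statements merged into one kernel-verified Lean document; each statement's English description precedes it below -/
import Mathlib

section
/- In the first-order polynomial DLM, for distinct sites i ≠ j and all distinct times s ≠ t (s, t ≥ 1), the same-time correlation strictly exceeds the cross-time correlation: Cor(y_{it}, y_{jt}) > Cor(y_{it}, y_{js}). -/
/-!
Writing `y i t = β0 + S t + ε i t` with `S t = δ 1 + ⋯ + δ t`, the three blocks are uncorrelated,
so `Cov(y i t, y j s) = σβ² + min t s · σδ² + Cov(ε i t, ε j s)`. With `x t = σβ² + t σδ²` and
`E = σε²`, the same-time correlation is `(x t + E e^{-d/λ}) / (x t + E) > x t / (x t + E)`, while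
for `s ≠ t` the noise term drops out and the cross-time correlation is
`min (x t) (x s) / √((x t + E)(x s + E)) ≤ x t / (x t + E)`, since `x ↦ x / √(x + E)` is increasing.
-/

open MeasureTheory Filter

/-- Covariance of two real random variables: `Cov(X,Y) = E[XY] - E[X]E[Y]`. -/
noncomputable def cov {Ω : Type*} [MeasurableSpace Ω] (μ : Measure Ω) (X Y : Ω → ℝ) : ℝ :=
  (∫ ω, X ω * Y ω ∂μ) - (∫ ω, X ω ∂μ) * (∫ ω, Y ω ∂μ)

/-- Correlation of two real random variables. -/
noncomputable def corr {Ω : Type*} [MeasurableSpace Ω] (μ : Measure Ω) (X Y : Ω → ℝ) : ℝ :=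
  cov μ X Y / (Real.sqrt (cov μ X X) * Real.sqrt (cov μ Y Y))

open ProbabilityTheory Finset

section

variable {Ω : Type*} [MeasurableSpace Ω] {μ : Measure Ω} [IsProbabilityMeasure μ]

lemma cov_eq_covariance {X Y : Ω → ℝ} (hX : MemLp X 2 μ) (hY : MemLp Y 2 μ) :
    cov μ X Y = covariance X Y μ :=
  (covariance_eq_sub hX hY).symm

lemma covariance_sum_sum_of_uncorrelated {ι : Type*} [DecidableEq ι] {X : ι → Ω → ℝ} {σ2 : ℝ}
    (hX : ∀ k, MemLp (X k) 2 μ) (hvar : ∀ k, covariance (X k) (X k) μ = σ2)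
    (hunc : ∀ k l, k ≠ l → covariance (X k) (X l) μ = 0) (A B : Finset ι) :
    covariance (∑ k ∈ A, X k) (∑ l ∈ B, X l) μ = #(A ∩ B) * σ2 := by
  rw [covariance_sum_sum' (fun k _ => hX k) (fun l _ => hX l)]
  have hrow : ∀ k, ∑ l ∈ B, covariance (X k) (X l) μ = if k ∈ B then σ2 else 0 := by
    intro k
    split_ifs with hk
    · rw [Finset.sum_eq_single_of_mem k hk (fun l _ hlk => hunc k l hlk.symm), hvar]
    · exact Finset.sum_eq_zero fun l hl => hunc k l (ne_of_mem_of_not_mem hl hk).symm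
  simp [hrow, Finset.sum_ite_mem]

lemma covariance_add_add_of_uncorrelated {β S S' ε ε' : Ω → ℝ} (hβ : MemLp β 2 μ)
    (hS : MemLp S 2 μ) (hS' : MemLp S' 2 μ) (hε : MemLp ε 2 μ) (hε' : MemLp ε' 2 μ)
    (hβS : covariance β S' μ = 0) (hSβ : covariance S β μ = 0) (hβε : covariance β ε' μ = 0)
    (hεβ : covariance ε β μ = 0) (hSε : covariance S ε' μ = 0) (hεS : covariance ε S' μ = 0) :
    covariance (β + S + ε) (β + S' + ε') μ
      = covariance β β μ + covariance S S' μ + covariance ε ε' μ := by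
  have hR := (hβ.add hS').add hε'
  rw [covariance_add_left (hβ.add hS) hε hR, covariance_add_left hβ hS hR]
  have expand : ∀ {X : Ω → ℝ}, MemLp X 2 μ → covariance X (β + S' + ε') μ
      = covariance X β μ + covariance X S' μ + covariance X ε' μ := fun hX => by
    rw [covariance_add_right hX (hβ.add hS') hε', covariance_add_right hX hβ hS']
  rw [expand hβ, expand hS, expand hε, hβS, hSβ, hβε, hεβ, hSε, hεS]
  ring

lemma covariance_firstOrderDLM {ι : Type*} {β0 : Ω → ℝ} {δ : ℕ → Ω → ℝ} {ε : ι → ℕ → Ω → ℝ}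
    {σδ2 : ℝ} (hβ : MemLp β0 2 μ) (hδ : ∀ k, MemLp (δ k) 2 μ) (hε : ∀ i t, MemLp (ε i t) 2 μ)
    (hδvar : ∀ k, covariance (δ k) (δ k) μ = σδ2)
    (hβδ : ∀ k, covariance β0 (δ k) μ = 0) (hδδ : ∀ k l, k ≠ l → covariance (δ k) (δ l) μ = 0)
    (hβε : ∀ i t, covariance β0 (ε i t) μ = 0) (hδε : ∀ k i t, covariance (δ k) (ε i t) μ = 0)
    (i j : ι) (t s : ℕ) :
    covariance (β0 + ∑ k ∈ Icc 1 t, δ k + ε i t) (β0 + ∑ k ∈ Icc 1 s, δ k + ε j s) μ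
      = covariance β0 β0 μ + min t s * σδ2 + covariance (ε i t) (ε j s) μ := by
  have hS : ∀ t, MemLp (∑ k ∈ Icc 1 t, δ k) 2 μ := fun t => memLp_finsetSum' _ fun k _ => hδ k
  have hβS : ∀ t, covariance β0 (∑ k ∈ Icc 1 t, δ k) μ = 0 := fun t => by
    rw [covariance_sum_right' (fun k _ => hδ k) hβ]
    exact sum_eq_zero fun k _ => hβδ k
  have hSε : ∀ t i s, covariance (∑ k ∈ Icc 1 t, δ k) (ε i s) μ = 0 := fun t i s => by
    rw [covariance_sum_left' (fun k _ => hδ k) (hε i s)]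
    exact sum_eq_zero fun k _ => hδε k i s
  rw [covariance_add_add_of_uncorrelated hβ (hS t) (hS s) (hε i t) (hε j s) (hβS s)
    (covariance_comm _ _ ▸ hβS t) (hβε j s) (covariance_comm _ _ ▸ hβε i t) (hSε t j s)
    (covariance_comm _ _ ▸ hSε s i t), covariance_sum_sum_of_uncorrelated hδ hδvar hδδ,
    show Icc 1 t ∩ Icc 1 s = Icc 1 (min t s) by ext; simp only [mem_inter, mem_Icc]; omega]
  simp

lemma cov_firstOrderDLM {ι : Type*} {β0 : Ω → ℝ} {δ : ℕ → Ω → ℝ} {ε y : ι → ℕ → Ω → ℝ}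
    {σδ2 : ℝ} (hβ : MemLp β0 2 μ) (hδ : ∀ k, MemLp (δ k) 2 μ) (hε : ∀ i t, MemLp (ε i t) 2 μ)
    (hδvar : ∀ k, cov μ (δ k) (δ k) = σδ2)
    (hβδ : ∀ k, cov μ β0 (δ k) = 0) (hδδ : ∀ k l, k ≠ l → cov μ (δ k) (δ l) = 0)
    (hβε : ∀ i t, cov μ β0 (ε i t) = 0) (hδε : ∀ k i t, cov μ (δ k) (ε i t) = 0)
    (hy : ∀ i t ω, y i t ω = β0 ω + (∑ k ∈ Icc 1 t, δ k ω) + ε i t ω) (i j : ι) (t s : ℕ) :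
    cov μ (y i t) (y j s) = cov μ β0 β0 + min t s * σδ2 + cov μ (ε i t) (ε j s) := by
  have hy' : ∀ i t, y i t = β0 + ∑ k ∈ Icc 1 t, δ k + ε i t := fun i t => by
    ext ω; simp [hy]
  have hyL2 : ∀ i t, MemLp (y i t) 2 μ := fun i t =>
    hy' i t ▸ (hβ.add (memLp_finsetSum' _ fun k _ => hδ k)).add (hε i t)
  rw [cov_eq_covariance (hyL2 i t) (hyL2 j s), cov_eq_covariance hβ hβ,
    cov_eq_covariance (hε i t) (hε j s), hy', hy']
  refine covariance_firstOrderDLM hβ hδ hε (fun k => ?_) (fun k => ?_) (fun k l hkl => ?_)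
    (fun i t => ?_) (fun k i t => ?_) i j t s
  · rw [← cov_eq_covariance (hδ k) (hδ k), hδvar]
  · rw [← cov_eq_covariance hβ (hδ k), hβδ]
  · rw [← cov_eq_covariance (hδ k) (hδ l), hδδ k l hkl]
  · rw [← cov_eq_covariance hβ (hε i t), hβε]
  · rw [← cov_eq_covariance (hδ k) (hε i t), hδε]

end

lemma min_div_sqrt_mul_sqrt_le {x y E : ℝ} (hx : 0 ≤ x) (hy : 0 ≤ y) (hE : 0 < E) :
    min x y / (√(x + E) * √(y + E)) ≤ x / (x + E) := by
  rcases le_total x y with hxy | hyx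
  · rw [min_eq_left hxy]
    conv_rhs => rw [← Real.mul_self_sqrt (by positivity : 0 ≤ x + E)]
    gcongr
  · set a := √(x + E)
    set b := √(y + E)
    have ha : a ^ 2 = x + E := Real.sq_sqrt (by positivity)
    have hb : b ^ 2 = y + E := Real.sq_sqrt (by positivity)
    have hba : b ≤ a := Real.sqrt_le_sqrt (by linarith)
    have hb0 : 0 ≤ b := Real.sqrt_nonneg _
    rw [min_eq_right hyx, div_le_div_iff₀ (by positivity) (by positivity)]
    -- substituting `x = a² - E`, `y = b² - E`, the gap `x a b - y (x + E)` is `a (a - b) (a b + E)`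
    have key : 0 ≤ a * (a - b) * (a * b + E) :=
      mul_nonneg (mul_nonneg (hb0.trans hba) (sub_nonneg.2 hba)) (by positivity)
    linear_combination key + (a * b - y) * ha - a ^ 2 * hb

theorem same_time_correlation_gt_cross_time_general
    {Ω : Type*} [MeasurableSpace Ω] (μ : Measure Ω) [IsProbabilityMeasure μ]
    (n : ℕ) (sb2 sd2 se2 lam : ℝ)
    (hb : 0 < sb2) (hd : 0 < sd2) (he : 0 < se2)
    (β0 : Ω → ℝ) (δ : ℕ → Ω → ℝ) (ε : Fin (n + 1) → ℕ → Ω → ℝ)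
    (d : Fin (n + 1) → Fin (n + 1) → ℝ)
    (hddiag : ∀ i, d i i = 0)
    (hβL2 : MemLp β0 2 μ) (hδL2 : ∀ k, MemLp (δ k) 2 μ)
    (hεL2 : ∀ i t, MemLp (ε i t) 2 μ)
    (hβvar : cov μ β0 β0 = sb2)
    (hδvar : ∀ k, cov μ (δ k) (δ k) = sd2)
    (hεcov : ∀ i j t, cov μ (ε i t) (ε j t) = se2 * Real.exp (-(d i j) / lam))
    (hβδ : ∀ k, cov μ β0 (δ k) = 0)
    (hδδ : ∀ k l, k ≠ l → cov μ (δ k) (δ l) = 0)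
    (hβε : ∀ i t, cov μ β0 (ε i t) = 0)
    (hδε : ∀ k i t, cov μ (δ k) (ε i t) = 0)
    (hεε : ∀ i j t s, t ≠ s → cov μ (ε i t) (ε j s) = 0)
    (y : Fin (n + 1) → ℕ → Ω → ℝ)
    (hy : ∀ i t ω, y i t ω = β0 ω + (∑ k ∈ Finset.Icc 1 t, δ k ω) + ε i t ω) :
    ∀ (i j : Fin (n + 1)), i ≠ j → ∀ (t s : ℕ), 1 ≤ t → 1 ≤ s → s ≠ t →
      corr μ (y i t) (y j t) > corr μ (y i t) (y j s) := by
  intro i j _ t s _ _ hst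
  have hcov := cov_firstOrderDLM hβL2 hδL2 hεL2 hδvar hβδ hδδ hβε hδε hy
  set A : ℕ → ℝ := fun t => sb2 + t * sd2
  have hvar : ∀ i t, cov μ (y i t) (y i t) = A t + se2 := fun i t => by
    simp [hcov, hεcov, hddiag, hβvar, A]
  have hsame : cov μ (y i t) (y j t) = A t + se2 * Real.exp (-(d i j) / lam) := by
    simp [hcov, hεcov, hβvar, A]
  have hcross : cov μ (y i t) (y j s) = min (A t) (A s) := by
    simp [hcov, hεε i j t s hst.symm, hβvar, A, ← min_add_add_left, min_mul_of_nonneg _ _ hd.le]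
  rw [gt_iff_lt, corr, corr, hvar i t, hvar j t, hvar j s, hsame, hcross,
    Real.mul_self_sqrt (by positivity)]
  calc min (A t) (A s) / (√(A t + se2) * √(A s + se2)) ≤ A t / (A t + se2) :=
        min_div_sqrt_mul_sqrt_le (by positivity) (by positivity) he
    _ < (A t + se2 * Real.exp (-(d i j) / lam)) / (A t + se2) := by
        gcongr
        exact lt_add_of_pos_right _ (by positivity)

/-- In the first-order polynomial DLM, for distinct sites `i ≠ j` and distinct
times `s ≠ t` (both `≥ 1`), the same-time correlation strictly exceeds the cross-time one:
`Cor(y_{it}, y_{jt}) > Cor(y_{it}, y_{js})`. -/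
theorem same_time_correlation_gt_cross_time
    {Ω : Type*} [MeasurableSpace Ω] (μ : Measure Ω) [IsProbabilityMeasure μ]
    (n : ℕ) (sb2 sd2 se2 lam : ℝ)
    (hb : 0 < sb2) (hd : 0 < sd2) (he : 0 < se2) (hl : 0 < lam)
    (β0 : Ω → ℝ) (δ : ℕ → Ω → ℝ) (ε : Fin (n + 1) → ℕ → Ω → ℝ)
    (d : Fin (n + 1) → Fin (n + 1) → ℝ)
    (hdsymm : ∀ i j, d i j = d j i) (hdnonneg : ∀ i j, 0 ≤ d i j)
    (hddiag : ∀ i, d i i = 0)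
    (hβL2 : MemLp β0 2 μ) (hδL2 : ∀ k, MemLp (δ k) 2 μ)
    (hεL2 : ∀ i t, MemLp (ε i t) 2 μ)
    (hβmean : (∫ ω, β0 ω ∂μ) = 0) (hδmean : ∀ k, (∫ ω, δ k ω ∂μ) = 0)
    (hεmean : ∀ i t, (∫ ω, ε i t ω ∂μ) = 0)
    (hβvar : cov μ β0 β0 = sb2)
    (hδvar : ∀ k, cov μ (δ k) (δ k) = sd2)
    (hεcov : ∀ i j t, cov μ (ε i t) (ε j t) = se2 * Real.exp (-(d i j) / lam))
    (hβδ : ∀ k, cov μ β0 (δ k) = 0)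
    (hδδ : ∀ k l, k ≠ l → cov μ (δ k) (δ l) = 0)
    (hβε : ∀ i t, cov μ β0 (ε i t) = 0)
    (hδε : ∀ k i t, cov μ (δ k) (ε i t) = 0)
    (hεε : ∀ i j t s, t ≠ s → cov μ (ε i t) (ε j s) = 0)
    (y : Fin (n + 1) → ℕ → Ω → ℝ)
    (hy : ∀ i t ω, y i t ω = β0 ω + (∑ k ∈ Finset.Icc 1 t, δ k ω) + ε i t ω) :
    ∀ (i j : Fin (n + 1)), i ≠ j → ∀ (t s : ℕ), 1 ≤ t → 1 ≤ s → s ≠ t →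
      corr μ (y i t) (y j t) > corr μ (y i t) (y j s) :=
  same_time_correlation_gt_cross_time_general μ n sb2 sd2 se2 lam hb hd he β0 δ ε d hddiag hβL2 hδL2
    hεL2 hβvar hδvar hεcov hβδ hδδ hβε hδε hεε y hy
end

section
/- In the first-order polynomial DLM, for distinct sites i ≠ j and any fixed time t ≥ 1, the cross-time correlation Cor(y_{it}, y_{js}), viewed as a function of s, attains its maximum at s = t and decreases as |s − t| increases: if s1, s2 ≥ 1 with |t − s1| < |t − s2| and s1, s2 lie on the same side of t (both < t or both > t), then Cor(y_{it}, y_{js1}) > Cor(y_{it}, y_{js2}); equivalently, the difference Cor(y_{it}, y_{jt}) − Cor(y_{it}, y_{js}) is a monotone increasing function of |t − s|. -/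
/-!
The level `β0 + δ₁ + ⋯ + δₜ` of the DLM is a random walk, so
`Cov(y_{it}, y_{js}) = σβ² + σδ² min(t, s)` for `t ≠ s`, while `Var(y_{js}) = σβ² + σδ² s + c`
with `c = σε² exp(-d_{jj}/λ) ≥ 0`. For `s < t` the correlation is therefore `x / √(x + c)` with
`x = σβ² + σδ² s`, up to a factor not depending on `s`, and `x ↦ x / √(x + c)` is increasing;
for `s > t` the numerator `σβ² + σδ² t` is fixed while `Var(y_{js})` grows with `s`.
-/

open MeasureTheory Filter

open Finset

section Covariance

variable {Ω : Type*} [MeasurableSpace Ω] {μ : Measure Ω}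

lemma cov_comm (X Y : Ω → ℝ) : cov μ X Y = cov μ Y X := by
  simp only [cov, mul_comm (X _), mul_comm (∫ ω, X ω ∂μ)]

variable [IsFiniteMeasure μ]

lemma cov_add_left {X X' Y : Ω → ℝ} (hX : MemLp X 2 μ) (hX' : MemLp X' 2 μ)
    (hY : MemLp Y 2 μ) : cov μ (X + X') Y = cov μ X Y + cov μ X' Y := by
  have hXY : Integrable (fun ω ↦ X ω * Y ω) μ := hX.integrable_mul hY
  have hX'Y : Integrable (fun ω ↦ X' ω * Y ω) μ := hX'.integrable_mul hY
  simp only [cov, Pi.add_apply, add_mul]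
  rw [integral_add hXY hX'Y,
    integral_add (hX.integrable one_le_two) (hX'.integrable one_le_two)]
  ring

lemma cov_add_right {X Y Y' : Ω → ℝ} (hX : MemLp X 2 μ) (hY : MemLp Y 2 μ)
    (hY' : MemLp Y' 2 μ) : cov μ X (Y + Y') = cov μ X Y + cov μ X Y' := by
  rw [cov_comm, cov_add_left hY hY' hX, cov_comm Y, cov_comm Y']

lemma cov_sum_left {ι : Type*} {A : Finset ι} {X : ι → Ω → ℝ} {Y : Ω → ℝ}
    (hX : ∀ k ∈ A, MemLp (X k) 2 μ) (hY : MemLp Y 2 μ) :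
    cov μ (fun ω ↦ ∑ k ∈ A, X k ω) Y = ∑ k ∈ A, cov μ (X k) Y := by
  have hXY : ∀ k ∈ A, Integrable (fun ω ↦ X k ω * Y ω) μ :=
    fun k hk ↦ (hX k hk).integrable_mul hY
  simp only [cov, sum_mul]
  have hX₁ : ∀ k ∈ A, Integrable (X k) μ := fun k hk ↦ (hX k hk).integrable one_le_two
  rw [integral_finsetSum A hXY, integral_finsetSum A hX₁, sum_mul, ← sum_sub_distrib]

lemma cov_sum_right {ι : Type*} {A : Finset ι} {X : Ω → ℝ} {Y : ι → Ω → ℝ}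
    (hX : MemLp X 2 μ) (hY : ∀ k ∈ A, MemLp (Y k) 2 μ) :
    cov μ X (fun ω ↦ ∑ k ∈ A, Y k ω) = ∑ k ∈ A, cov μ X (Y k) := by
  rw [cov_comm, cov_sum_left hY hX]
  exact sum_congr rfl fun k _ ↦ cov_comm (Y k) X

lemma cov_sum_sum_of_uncorrelated {ι : Type*} [DecidableEq ι] {X : ι → Ω → ℝ} {σ2 : ℝ}
    (hX : ∀ k, MemLp (X k) 2 μ) (hvar : ∀ k, cov μ (X k) (X k) = σ2)
    (hunc : ∀ k l, k ≠ l → cov μ (X k) (X l) = 0) (A B : Finset ι) :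
    cov μ (fun ω ↦ ∑ k ∈ A, X k ω) (fun ω ↦ ∑ l ∈ B, X l ω) = σ2 * #(A ∩ B) := by
  have hcov : ∀ k l, cov μ (X k) (X l) = if k = l then σ2 else 0 := by
    intro k l
    split_ifs with h
    · exact h ▸ hvar k
    · exact hunc k l h
  rw [cov_sum_left (fun k _ ↦ hX k) (memLp_finsetSum B fun l _ ↦ hX l)]
  simp only [cov_sum_right (hX _) (fun l _ ↦ hX l), hcov, sum_ite_eq, ← sum_filter,
    sum_const, nsmul_eq_mul, filter_mem_eq_inter, mul_comm σ2]

end Covariance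

section DLM

variable {Ω : Type*} [MeasurableSpace Ω] {μ : Measure Ω}

noncomputable def dlmLevel (β0 : Ω → ℝ) (δ : ℕ → Ω → ℝ) (t : ℕ) : Ω → ℝ :=
  fun ω ↦ β0 ω + ∑ k ∈ Icc 1 t, δ k ω

lemma memLp_dlmLevel {β0 : Ω → ℝ} {δ : ℕ → Ω → ℝ} (hβL2 : MemLp β0 2 μ)
    (hδL2 : ∀ k, MemLp (δ k) 2 μ) (t : ℕ) : MemLp (dlmLevel β0 δ t) 2 μ :=
  hβL2.add (memLp_finsetSum _ fun k _ ↦ hδL2 k)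

variable [IsFiniteMeasure μ]

lemma cov_dlmLevel {β0 : Ω → ℝ} {δ : ℕ → Ω → ℝ} {sb2 sd2 : ℝ}
    (hβL2 : MemLp β0 2 μ) (hδL2 : ∀ k, MemLp (δ k) 2 μ)
    (hβvar : cov μ β0 β0 = sb2) (hδvar : ∀ k, cov μ (δ k) (δ k) = sd2)
    (hβδ : ∀ k, cov μ β0 (δ k) = 0) (hδδ : ∀ k l, k ≠ l → cov μ (δ k) (δ l) = 0)
    (t s : ℕ) :
    cov μ (dlmLevel β0 δ t) (dlmLevel β0 δ s) = sb2 + sd2 * (min t s : ℕ) := by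
  have hS : ∀ r, MemLp (fun ω ↦ ∑ k ∈ Icc 1 r, δ k ω) 2 μ :=
    fun r ↦ memLp_finsetSum _ fun k _ ↦ hδL2 k
  have hβS : ∀ r, cov μ β0 (fun ω ↦ ∑ k ∈ Icc 1 r, δ k ω) = 0 := fun r ↦ by
    rw [cov_sum_right hβL2 fun k _ ↦ hδL2 k]
    exact sum_eq_zero fun k _ ↦ hβδ k
  have hIcc : Icc 1 t ∩ Icc 1 s = Icc 1 (min t s) := by
    ext; simp only [mem_inter, mem_Icc]; omega
  change cov μ (β0 + _) (β0 + _) = _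
  rw [cov_add_left hβL2 (hS t) (hβL2.add (hS s)), cov_add_right hβL2 hβL2 (hS s),
    cov_add_right (hS t) hβL2 (hS s), hβS, cov_comm (fun ω ↦ ∑ k ∈ Icc 1 t, δ k ω) β0, hβS,
    hβvar, cov_sum_sum_of_uncorrelated hδL2 hδvar hδδ, hIcc, Nat.card_Icc, add_tsub_cancel_right]
  ring

lemma cov_dlmLevel_noise {β0 : Ω → ℝ} {δ : ℕ → Ω → ℝ} {e : Ω → ℝ}
    (hβL2 : MemLp β0 2 μ) (hδL2 : ∀ k, MemLp (δ k) 2 μ) (heL2 : MemLp e 2 μ)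
    (hβe : cov μ β0 e = 0) (hδe : ∀ k, cov μ (δ k) e = 0) (t : ℕ) :
    cov μ (dlmLevel β0 δ t) e = 0 := by
  change cov μ (β0 + _) e = 0
  rw [cov_add_left hβL2 (memLp_finsetSum _ fun k _ ↦ hδL2 k) heL2,
    cov_sum_left (fun k _ ↦ hδL2 k) heL2, hβe, sum_eq_zero fun k _ ↦ hδe k, add_zero]

lemma cov_dlm {n : ℕ} {sb2 sd2 se2 lam : ℝ} {β0 : Ω → ℝ} {δ : ℕ → Ω → ℝ}
    {ε : Fin (n + 1) → ℕ → Ω → ℝ} {d : Fin (n + 1) → Fin (n + 1) → ℝ}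
    (hβL2 : MemLp β0 2 μ) (hδL2 : ∀ k, MemLp (δ k) 2 μ) (hεL2 : ∀ i t, MemLp (ε i t) 2 μ)
    (hβvar : cov μ β0 β0 = sb2) (hδvar : ∀ k, cov μ (δ k) (δ k) = sd2)
    (hεcov : ∀ i j t, cov μ (ε i t) (ε j t) = se2 * Real.exp (-(d i j) / lam))
    (hβδ : ∀ k, cov μ β0 (δ k) = 0) (hδδ : ∀ k l, k ≠ l → cov μ (δ k) (δ l) = 0)
    (hβε : ∀ i t, cov μ β0 (ε i t) = 0) (hδε : ∀ k i t, cov μ (δ k) (ε i t) = 0)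
    (hεε : ∀ i j t s, t ≠ s → cov μ (ε i t) (ε j s) = 0)
    {y : Fin (n + 1) → ℕ → Ω → ℝ}
    (hy : ∀ i t ω, y i t ω = β0 ω + (∑ k ∈ Icc 1 t, δ k ω) + ε i t ω) (i j : Fin (n + 1))
    (t s : ℕ) :
    cov μ (y i t) (y j s) = sb2 + sd2 * (min t s : ℕ) +
      if t = s then se2 * Real.exp (-(d i j) / lam) else 0 := by
  have hθ := memLp_dlmLevel hβL2 hδL2
  have hθε : ∀ i t s, cov μ (dlmLevel β0 δ t) (ε i s) = 0 := fun i t s ↦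
    cov_dlmLevel_noise hβL2 hδL2 (hεL2 i s) (hβε i s) (fun k ↦ hδε k i s) t
  have hy' : ∀ i t, y i t = dlmLevel β0 δ t + ε i t := fun i t ↦ funext (hy i t)
  rw [hy', hy', cov_add_left (hθ t) (hεL2 i t) ((hθ s).add (hεL2 j s)),
    cov_add_right (hθ t) (hθ s) (hεL2 j s), cov_add_right (hεL2 i t) (hθ s) (hεL2 j s),
    cov_comm (ε i t), hθε, hθε, cov_dlmLevel hβL2 hδL2 hβvar hδvar hβδ hδδ]
  split_ifs with hts
  · rw [← hts, hεcov]; ring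
  · rw [hεε i j t s hts]; ring

end DLM

lemma div_mul_sqrt_add_lt_div_mul_sqrt_add {x x' c C : ℝ} (hx : 0 < x) (hxx' : x < x')
    (hc : 0 ≤ c) (hC : 0 < C) : x / (C * √(x + c)) < x' / (C * √(x' + c)) := by
  have hx' : 0 < x' := hx.trans hxx'
  rw [div_lt_div_iff₀ (by positivity) (by positivity), mul_left_comm, mul_left_comm x']
  refine mul_lt_mul_of_pos_left ?_ hC
  rw [← sq_lt_sq₀ (by positivity) (by positivity), mul_pow, mul_pow,
    Real.sq_sqrt (by positivity), Real.sq_sqrt (by positivity)]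
  -- `x'² (x + c) - x² (x' + c) = (x' - x) (x x' + c (x + x'))`
  nlinarith [mul_pos (sub_pos.2 hxx') (mul_pos hx hx'),
    mul_nonneg (sub_pos.2 hxx').le (mul_nonneg hc (add_pos hx hx').le)]

theorem cross_time_correlation_decreasing_general
    {Ω : Type*} [MeasurableSpace Ω] (μ : Measure Ω) [IsProbabilityMeasure μ]
    (n : ℕ) (sb2 sd2 se2 lam : ℝ)
    (hb : 0 < sb2) (hd : 0 < sd2) (he : 0 < se2)
    (β0 : Ω → ℝ) (δ : ℕ → Ω → ℝ) (ε : Fin (n + 1) → ℕ → Ω → ℝ)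
    (d : Fin (n + 1) → Fin (n + 1) → ℝ)
    (hβL2 : MemLp β0 2 μ) (hδL2 : ∀ k, MemLp (δ k) 2 μ)
    (hεL2 : ∀ i t, MemLp (ε i t) 2 μ)
    (hβvar : cov μ β0 β0 = sb2)
    (hδvar : ∀ k, cov μ (δ k) (δ k) = sd2)
    (hεcov : ∀ i j t, cov μ (ε i t) (ε j t) = se2 * Real.exp (-(d i j) / lam))
    (hβδ : ∀ k, cov μ β0 (δ k) = 0)
    (hδδ : ∀ k l, k ≠ l → cov μ (δ k) (δ l) = 0)
    (hβε : ∀ i t, cov μ β0 (ε i t) = 0)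
    (hδε : ∀ k i t, cov μ (δ k) (ε i t) = 0)
    (hεε : ∀ i j t s, t ≠ s → cov μ (ε i t) (ε j s) = 0)
    (y : Fin (n + 1) → ℕ → Ω → ℝ)
    (hy : ∀ i t ω, y i t ω = β0 ω + (∑ k ∈ Finset.Icc 1 t, δ k ω) + ε i t ω) :
    ∀ (i j : Fin (n + 1)), i ≠ j → ∀ (t : ℕ), 1 ≤ t →
      ∀ (s1 s2 : ℕ), 1 ≤ s1 → 1 ≤ s2 →
        |(t : ℤ) - (s1 : ℤ)| < |(t : ℤ) - (s2 : ℤ)| →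
        ((s1 < t ∧ s2 < t) ∨ (t < s1 ∧ t < s2)) →
        corr μ (y i t) (y j s1) > corr μ (y i t) (y j s2) := by
  intro i j _ t _ s1 s2 _ _ hdist hside
  have hcov := cov_dlm hβL2 hδL2 hεL2 hβvar hδvar hεcov hβδ hδδ hβε hδε hεε hy
  have hcorr : ∀ s, t ≠ s → corr μ (y i t) (y j s) = (sb2 + sd2 * (min t s : ℕ)) /
      (√(cov μ (y i t) (y i t)) * √(sb2 + sd2 * s + se2 * Real.exp (-(d j j) / lam))) :=
    fun s hts ↦ by simp [corr, hcov, hts]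
  have hvar_pos : 0 < cov μ (y i t) (y i t) := by rw [hcov]; positivity
  simp only [Int.abs_eq_natAbs] at hdist
  rcases hside with ⟨hs1, hs2⟩ | ⟨hs1, hs2⟩
  · rw [hcorr s1 hs1.ne', hcorr s2 hs2.ne', min_eq_right hs1.le, min_eq_right hs2.le]
    refine div_mul_sqrt_add_lt_div_mul_sqrt_add (by positivity) ?_ (by positivity)
      (Real.sqrt_pos.2 hvar_pos)
    gcongr
    omega
  · rw [hcorr s1 hs1.ne, hcorr s2 hs2.ne, min_eq_left hs1.le, min_eq_left hs2.le]
    gcongr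
    omega

/-- In the first-order polynomial DLM, for distinct sites `i ≠ j` and fixed time
`t ≥ 1`, the cross-time correlation `Cor(y_{it}, y_{js})` as a function of `s` decreases as
`|s − t|` increases: if `s1, s2 ≥ 1` lie on the same side of `t` with `|t − s1| < |t − s2|`,
then `Cor(y_{it}, y_{js1}) > Cor(y_{it}, y_{js2})`. -/
theorem cross_time_correlation_decreasing
    {Ω : Type*} [MeasurableSpace Ω] (μ : Measure Ω) [IsProbabilityMeasure μ]
    (n : ℕ) (sb2 sd2 se2 lam : ℝ)
    (hb : 0 < sb2) (hd : 0 < sd2) (he : 0 < se2) (hl : 0 < lam)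
    (β0 : Ω → ℝ) (δ : ℕ → Ω → ℝ) (ε : Fin (n + 1) → ℕ → Ω → ℝ)
    (d : Fin (n + 1) → Fin (n + 1) → ℝ)
    (hdsymm : ∀ i j, d i j = d j i) (hdnonneg : ∀ i j, 0 ≤ d i j)
    (hddiag : ∀ i, d i i = 0)
    (hβL2 : MemLp β0 2 μ) (hδL2 : ∀ k, MemLp (δ k) 2 μ)
    (hεL2 : ∀ i t, MemLp (ε i t) 2 μ)
    (hβmean : (∫ ω, β0 ω ∂μ) = 0) (hδmean : ∀ k, (∫ ω, δ k ω ∂μ) = 0)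
    (hεmean : ∀ i t, (∫ ω, ε i t ω ∂μ) = 0)
    (hβvar : cov μ β0 β0 = sb2)
    (hδvar : ∀ k, cov μ (δ k) (δ k) = sd2)
    (hεcov : ∀ i j t, cov μ (ε i t) (ε j t) = se2 * Real.exp (-(d i j) / lam))
    (hβδ : ∀ k, cov μ β0 (δ k) = 0)
    (hδδ : ∀ k l, k ≠ l → cov μ (δ k) (δ l) = 0)
    (hβε : ∀ i t, cov μ β0 (ε i t) = 0)
    (hδε : ∀ k i t, cov μ (δ k) (ε i t) = 0)
    (hεε : ∀ i j t s, t ≠ s → cov μ (ε i t) (ε j s) = 0)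
    (y : Fin (n + 1) → ℕ → Ω → ℝ)
    (hy : ∀ i t ω, y i t ω = β0 ω + (∑ k ∈ Finset.Icc 1 t, δ k ω) + ε i t ω) :
    ∀ (i j : Fin (n + 1)), i ≠ j → ∀ (t : ℕ), 1 ≤ t →
      ∀ (s1 s2 : ℕ), 1 ≤ s1 → 1 ≤ s2 →
        |(t : ℤ) - (s1 : ℤ)| < |(t : ℤ) - (s2 : ℤ)| →
        ((s1 < t ∧ s2 < t) ∨ (t < s1 ∧ t < s2)) →
        corr μ (y i t) (y j s1) > corr μ (y i t) (y j s2) :=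
  cross_time_correlation_decreasing_general μ n sb2 sd2 se2 lam hb hd he β0 δ ε d hβL2 hδL2 hεL2
    hβvar hδvar hεcov hβδ hδδ hβε hδε hεε y hy
end
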